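/- Let x < y in the Bruhat order on S_n and let s be a simple reflection with sy < y, sx < x, and suppose x is not comparable to sy in the Bruhat order. Then the map z ↦ sz is an order-preserving bijection from the Bruhat interval [x, y] = {z : x ≤ z ≤ y} onto the Bruhat interval [sx, sy] = {z' : sx ≤ z' ≤ sy}. -/

import Mathlib

/-!
Ehresmann's criterion: `x ≤ y` in Bruhat order iff `#{q < p | j ≤ x q} ≤ #{q < p | j ≤ y q}` for
all `p, j`. One direction holds because a length-increasing transposition moves a larger value
to an earlier position; for the other, a transposition lowering `y` while keeping all counts above
those of `x` is read off the first position where `x` and `y` differ. Left multiplication by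
`s = (a, a+1)` changes only the counts at `j = a + 1`, by at most one, which gives the lifting
property: if `u ≤ w` then `u ≤ sw` when `su > u`, and `su ≤ w` when `sw < w`.

Since `x ≰ sy`, lifting forces every `z ∈ [x, y]` to have `s` as a left descent and every
`z' ∈ [sx, sy]` to have `s` as a left ascent. If `u ≤ w` and `s` is a descent of `u` or an ascent
of `w`, lifting also gives `su ≤ sw`; so `z ↦ sz` and `z' ↦ sz'` are mutually inverse
order-preserving maps between the two intervals.
-/

open Equiv

/-- The simple transposition σ_i = (i, i+1) in S_n (0-indexed). -/
def simpleT (n i : ℕ) (h : i + 1 < n) : Perm (Fin n) :=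
  Equiv.swap ⟨i, Nat.lt_of_succ_lt h⟩ ⟨i + 1, h⟩

/-- Coxeter length = number of inversions. -/
def len {n : ℕ} (w : Perm (Fin n)) : ℕ :=
  (Finset.univ.filter fun p : Fin n × Fin n => p.1 < p.2 ∧ w p.2 < w p.1).card

/-- Parabolic subgroup generated by the simple reflections with indices in J. -/
def SJ (n : ℕ) (J : Set ℕ) : Subgroup (Perm (Fin n)) :=
  Subgroup.closure {s | ∃ i, ∃ h : i + 1 < n, i ∈ J ∧ s = simpleT n i h}

/-- Minimal length left coset representatives: ℓ(ws) > ℓ(w) for all s ∈ J. -/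
def DJ (n : ℕ) (J : Set ℕ) : Set (Perm (Fin n)) :=
  {w | ∀ i, ∀ h : i + 1 < n, i ∈ J → len w < len (w * simpleT n i h)}

/-- Minimal double coset representatives: ℓ(s₁v) > ℓ(v), ℓ(vs₂) > ℓ(v). -/
def D2 (n : ℕ) (J1 J2 : Set ℕ) : Set (Perm (Fin n)) :=
  {v | (∀ i, ∀ h : i + 1 < n, i ∈ J1 → len v < len (simpleT n i h * v)) ∧
       (∀ i, ∀ h : i + 1 < n, i ∈ J2 → len v < len (v * simpleT n i h))}

/-- Bruhat order: reflexive transitive closure of multiplying by a transposition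
while increasing the length. -/
def BruhatLE {n : ℕ} (x y : Perm (Fin n)) : Prop :=
  Relation.ReflTransGen
    (fun u v => (∃ a b : Fin n, a ≠ b ∧ v = Equiv.swap a b * u) ∧ len u < len v) x y

def BruhatLT {n : ℕ} (x y : Perm (Fin n)) : Prop := BruhatLE x y ∧ x ≠ y

/-- w is the cycle (i₁−j+1, …, i₀+1, i₀): sends i to i−1 for i₀ < i ≤ i₁−j+1,
sends i₀ to i₁−j+1, and fixes all other points. -/
def IsCycleW (n i0 i1 j : ℕ) (w : Perm (Fin n)) : Prop :=
  ∀ i : Fin n,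
    ((i0 < (i : ℕ) ∧ (i : ℕ) ≤ i1 - j + 1) → (w i : ℕ) = (i : ℕ) - 1) ∧
    ((i : ℕ) = i0 → (w i : ℕ) = i1 - j + 1) ∧
    (((i : ℕ) < i0 ∨ i1 - j + 1 < (i : ℕ)) → w i = i)


open Finset

section Counting

variable {α : Type*} [Fintype α] [DecidableEq α]

theorem sum_eq_add_add_sum_erase_erase {M : Type*} [AddCommMonoid M] (f : α → M) {a b : α}
    (hab : a ≠ b) : ∑ x, f x = f a + f b + ∑ x ∈ (univ.erase a).erase b, f x := by
  rw [add_assoc, add_sum_erase _ _ (mem_erase.2 ⟨hab.symm, mem_univ b⟩),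
    add_sum_erase _ _ (mem_univ a)]

theorem card_filter_add_ite_eq {P Q : α → Prop} [DecidablePred P] [DecidablePred Q] (a : α)
    (h : ∀ x, x ≠ a → (P x ↔ Q x)) :
    #{x | P x} + (if Q a then 1 else 0) = #{x | Q x} + (if P a then 1 else 0) := by
  rw [card_filter, card_filter, ← add_sum_erase _ _ (mem_univ a),
    ← add_sum_erase _ _ (mem_univ a),
    sum_congr rfl fun x hx => if_congr (h x (ne_of_mem_erase hx)) rfl rfl]
  ring

theorem card_filter_add_ite_add_ite_eq {P Q : α → Prop} [DecidablePred P] [DecidablePred Q]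
    {a b : α} (hab : a ≠ b) (h : ∀ x, x ≠ a → x ≠ b → (P x ↔ Q x)) :
    #{x | P x} + ((if Q a then 1 else 0) + (if Q b then 1 else 0)) =
      #{x | Q x} + ((if P a then 1 else 0) + (if P b then 1 else 0)) := by
  rw [card_filter, card_filter, sum_eq_add_add_sum_erase_erase _ hab,
    sum_eq_add_add_sum_erase_erase _ hab, sum_congr rfl fun x hx =>
      if_congr (h x (ne_of_mem_erase (mem_of_mem_erase hx)) (ne_of_mem_erase hx)) rfl rfl]
  ring

end Counting

section Permutations

variable {n : ℕ}

def rankCount (w : Perm (Fin n)) (p j : ℕ) : ℕ :=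
  #{q : Fin n | (q : ℕ) < p ∧ j ≤ (w q : ℕ)}

def RankLE (x y : Perm (Fin n)) : Prop :=
  ∀ p j, rankCount x p j ≤ rankCount y p j

theorem RankLE.trans {x y z : Perm (Fin n)} (hxy : RankLE x y) (hyz : RankLE y z) :
    RankLE x z :=
  fun p j => (hxy p j).trans (hyz p j)

theorem rankCount_succ (w : Perm (Fin n)) (q : Fin n) (j : ℕ) :
    rankCount w (q + 1) j = rankCount w q j + if j ≤ (w q : ℕ) then 1 else 0 := by
  have := card_filter_add_ite_eq (P := fun r : Fin n => (r : ℕ) < q + 1 ∧ j ≤ (w r : ℕ))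
    (Q := fun r : Fin n => (r : ℕ) < q ∧ j ≤ (w r : ℕ)) q fun r hr => by
      have : (r : ℕ) ≠ q := Fin.val_ne_of_ne hr
      constructor <;> rintro ⟨h1, h2⟩ <;> exact ⟨by omega, h2⟩
  simpa [rankCount] using this

theorem rankCount_eq_rankCount_succ_add (w : Perm (Fin n)) (p : ℕ) (j : Fin n) :
    rankCount w p j = rankCount w p (j + 1) + if (w⁻¹ j : ℕ) < p then 1 else 0 := by
  have := card_filter_add_ite_eq (P := fun r : Fin n => (r : ℕ) < p ∧ (j : ℕ) ≤ (w r : ℕ))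
    (Q := fun r : Fin n => (r : ℕ) < p ∧ (j : ℕ) + 1 ≤ (w r : ℕ)) (w⁻¹ j) fun r hr => by
      have : (w r : ℕ) ≠ j := fun h => hr (by simp [← Fin.ext h])
      constructor <;> rintro ⟨h1, h2⟩ <;> exact ⟨h1, by omega⟩
  simpa [rankCount] using this

theorem rankCount_congr {x y : Perm (Fin n)} {p : ℕ} (h : ∀ q : Fin n, (q : ℕ) < p → x q = y q)
    (j : ℕ) : rankCount x p j = rankCount y p j :=
  congrArg card (filter_congr fun q _ => and_congr_right fun hq => by rw [h q hq])

theorem rankCount_add_rankCount_le (w : Perm (Fin n)) {m p j' j : ℕ} (hmp : m ≤ p)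
    (hj : j' ≤ j) :
    rankCount w p j + rankCount w m j' ≤ rankCount w p j' + rankCount w m j := by
  unfold rankCount
  rw [← card_union_add_card_inter]
  refine add_le_add (card_le_card fun q => ?_) (card_le_card fun q => ?_) <;>
    simp only [mem_union, mem_inter, mem_filter, mem_univ, true_and] <;> omega

theorem rankCount_add_rankCount_eq (w : Perm (Fin n)) {m p j' j : ℕ} (hmp : m ≤ p)
    (hj : j' ≤ j) (hgap : ∀ q : Fin n, m ≤ q → (q : ℕ) < p → ¬ (j' ≤ (w q : ℕ) ∧ (w q : ℕ) < j)) :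
    rankCount w p j + rankCount w m j' = rankCount w p j' + rankCount w m j := by
  unfold rankCount
  rw [← card_union_add_card_inter]
  congr 2 <;> ext q <;> simp only [mem_union, mem_inter, mem_filter, mem_univ, true_and]
  · have := hgap q
    omega
  · omega

theorem rankCount_swap_mul (w : Perm (Fin n)) {a b : Fin n} (hab : a ≠ b) (p j : ℕ) :
    rankCount (swap a b * w) p j +
        ((if (w⁻¹ a : ℕ) < p ∧ j ≤ (a : ℕ) then 1 else 0) +
          (if (w⁻¹ b : ℕ) < p ∧ j ≤ (b : ℕ) then 1 else 0)) =
      rankCount w p j +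
        ((if (w⁻¹ a : ℕ) < p ∧ j ≤ (b : ℕ) then 1 else 0) +
          (if (w⁻¹ b : ℕ) < p ∧ j ≤ (a : ℕ) then 1 else 0)) := by
  have := card_filter_add_ite_add_ite_eq
    (P := fun q : Fin n => (q : ℕ) < p ∧ j ≤ ((swap a b * w) q : ℕ))
    (Q := fun q : Fin n => (q : ℕ) < p ∧ j ≤ (w q : ℕ)) (a := w⁻¹ a) (b := w⁻¹ b)
    (by simpa using hab) fun q ha hb => by
      rw [Perm.mul_apply, swap_apply_of_ne_of_ne (fun h => ha (by simp [← h]))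
        (fun h => hb (by simp [← h]))]
  simpa [rankCount] using this

theorem rankLE_swap_mul {w : Perm (Fin n)} {a b : Fin n} (hab : a < b) (hw : w⁻¹ a < w⁻¹ b) :
    RankLE w (swap a b * w) := fun p j => by
  have := rankCount_swap_mul w hab.ne p j
  split_ifs at this <;> omega

theorem len_eq_sum_rankCount (w : Perm (Fin n)) :
    len w = ∑ p : Fin n, rankCount w p (w p + 1) := by
  rw [len, card_filter, Fintype.sum_prod_type_right]
  refine sum_congr rfl fun p _ => ?_
  rw [rankCount, card_filter]
  refine sum_congr rfl fun q _ => if_congr ?_ rfl rfl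
  simp only [Fin.lt_def]
  omega

/-- The swap raises every summand of `len_eq_sum_rankCount` except the two at the swapped positions,
and by `rankCount_add_rankCount_le` these two together still gain one. -/
theorem len_lt_len_swap_mul {w : Perm (Fin n)} {a b : Fin n} (hab : a < b)
    (hw : w⁻¹ a < w⁻¹ b) : len w < len (swap a b * w) := by
  have hne : w⁻¹ a ≠ w⁻¹ b := hw.ne
  rw [len_eq_sum_rankCount, len_eq_sum_rankCount, sum_eq_add_add_sum_erase_erase _ hne,
    sum_eq_add_add_sum_erase_erase _ hne]
  have hrest : ∑ p ∈ (univ.erase (w⁻¹ a)).erase (w⁻¹ b), rankCount w p (w p + 1) ≤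
      ∑ p ∈ (univ.erase (w⁻¹ a)).erase (w⁻¹ b), rankCount (swap a b * w) p ((swap a b * w) p + 1) :=
    sum_le_sum fun p hp => by
      rw [Perm.mul_apply, swap_apply_of_ne_of_ne
        (fun h => ne_of_mem_erase (mem_of_mem_erase hp) (by simp [← h]))
        (fun h => ne_of_mem_erase hp (by simp [← h]))]
      exact rankLE_swap_mul hab hw _ _
  have hqa := rankCount_swap_mul w hab.ne (w⁻¹ a) (b + 1)
  have hqb := rankCount_swap_mul w hab.ne (w⁻¹ b) (a + 1)
  have hwin := rankCount_add_rankCount_le w (m := w⁻¹ a) (p := w⁻¹ b) (j' := a + 1) (j := b + 1)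
    hw.le (by omega)
  have hva : (swap a b * w) (w⁻¹ a) = b := by simp
  have hvb : (swap a b * w) (w⁻¹ b) = a := by simp
  have hwa : w (w⁻¹ a) = a := w.apply_symm_apply a
  have hwb : w (w⁻¹ b) = b := w.apply_symm_apply b
  rw [hva, hvb, hwa, hwb]
  split_ifs at hqa hqb <;> omega

theorem len_lt_len_swap_mul_iff {w : Perm (Fin n)} {a b : Fin n} (hab : a < b) :
    len w < len (swap a b * w) ↔ w⁻¹ a < w⁻¹ b := by
  refine ⟨fun h => ?_, len_lt_len_swap_mul hab⟩
  by_contra! hle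
  have hlt : w⁻¹ b < w⁻¹ a := hle.lt_of_ne (by simpa using hab.ne')
  have := len_lt_len_swap_mul hab (w := swap a b * w) (by simpa [mul_inv_rev] using hlt)
  rw [swap_mul_self_mul] at this
  exact lt_asymm h this

theorem len_swap_mul_lt_iff {w : Perm (Fin n)} {a b : Fin n} (hab : a < b) :
    len (swap a b * w) < len w ↔ w⁻¹ b < w⁻¹ a := by
  simpa [swap_mul_self_mul, mul_inv_rev] using len_lt_len_swap_mul_iff hab (w := swap a b * w)

def BruhatStep (u v : Perm (Fin n)) : Prop :=
  (∃ a b : Fin n, a ≠ b ∧ v = swap a b * u) ∧ len u < len v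

theorem BruhatStep.rankLE {u v : Perm (Fin n)} (h : BruhatStep u v) : RankLE u v := by
  obtain ⟨⟨a, b, hab, rfl⟩, hlen⟩ := h
  rcases hab.lt_or_gt with hlt | hlt
  · exact rankLE_swap_mul hlt ((len_lt_len_swap_mul_iff hlt).1 hlen)
  · rw [swap_comm] at hlen ⊢
    exact rankLE_swap_mul hlt ((len_lt_len_swap_mul_iff hlt).1 hlen)

theorem BruhatLE.rankLE {x y : Perm (Fin n)} (h : BruhatLE x y) : RankLE x y := by
  induction h with
  | refl => exact fun _ _ => le_rfl
  | tail _ hstep ih => exact ih.trans (BruhatStep.rankLE hstep)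

theorem rankCount_lt_rankCount_of_gap {x y : Perm (Fin n)} (hxy : RankLE x y) {i : Fin n}
    (hi : ∀ j, rankCount x i j = rankCount y i j) {p j : ℕ} (hip : (i : ℕ) < p)
    (hxj : (x i : ℕ) < j) (hjy : j ≤ (y i : ℕ))
    (hgap : ∀ q : Fin n, i < q → (q : ℕ) < p → ¬ ((x i : ℕ) ≤ y q ∧ (y q : ℕ) < j)) :
    rankCount x p j < rankCount y p j := by
  have hx := rankCount_add_rankCount_le x (m := i + 1) hip hxj.le
  have hy := rankCount_add_rankCount_eq y (m := i + 1) hip hxj.le fun q h1 h2 =>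
    hgap q (by omega) h2
  have hcrit := hxy p (x i)
  have hx1 := rankCount_succ x i j
  have hy1 := rankCount_succ y i j
  have hx2 := rankCount_succ x i (x i)
  have hy2 := rankCount_succ y i (x i)
  have := hi j
  have := hi (x i)
  split_ifs at hx1 hy1 hx2 hy2 <;> omega

theorem exists_bruhatStep_rankLE {x y : Perm (Fin n)} (hxy : RankLE x y) (hne : x ≠ y) :
    ∃ y', BruhatStep y' y ∧ RankLE x y' := by
  -- `i` is the first position where `x` and `y` differ, `q` the first position after `i` where
  -- `y` takes a value in `[x i, y i)`. Swapping the values `y q` and `y i` lowers the counts of `y`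
  -- exactly on the box `(i, q] × (y q, y i]`, where they strictly exceed those of `x`.
  obtain ⟨i, hi, hi_min⟩ := wellFounded_lt.has_min {q | x q ≠ y q} (DFunLike.ne_iff.mp hne)
  have hpre : ∀ q : Fin n, (q : ℕ) < i → x q = y q := fun q hq => not_not.1 fun h => hi_min q h hq
  have hrank : ∀ j, rankCount x i j = rankCount y i j := rankCount_congr hpre
  have hlt : x i < y i := by
    have h := hxy (i + 1) (x i)
    have hne : x i ≠ y i := hi
    rw [rankCount_succ, rankCount_succ, hrank] at h
    split_ifs at h <;> omega
  have hpos : i < y⁻¹ (x i) := by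
    have hyx : y (y⁻¹ (x i)) = x i := y.apply_symm_apply _
    rcases lt_trichotomy (y⁻¹ (x i)) i with h | h | h
    · have := hpre _ h
      rw [hyx] at this
      exact absurd (x.injective this) h.ne
    · rw [h] at hyx
      exact absurd hyx.symm hi
    · exact h
  obtain ⟨q, ⟨hiq, hxq, hqi⟩, hq_min⟩ := wellFounded_lt.has_min
    {q | i < q ∧ x i ≤ y q ∧ y q < y i} ⟨y⁻¹ (x i), hpos, by simp, by simpa using hlt⟩
  refine ⟨swap (y q) (y i) * y, ⟨⟨y q, y i, hqi.ne, (swap_mul_self_mul _ _ _).symm⟩, ?_⟩,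
    fun p j => ?_⟩
  · exact (len_swap_mul_lt_iff hqi).2 (by simpa using hiq)
  have h := rankCount_swap_mul y hqi.ne p j
  have hq : y⁻¹ (y q) = q := y.symm_apply_apply q
  have hi' : y⁻¹ (y i) = i := y.symm_apply_apply i
  rw [hq, hi'] at h
  have := hxy p j
  by_cases hbox : (i : ℕ) < p ∧ p ≤ (q : ℕ) ∧ (y q : ℕ) < j ∧ j ≤ (y i : ℕ)
  · have := rankCount_lt_rankCount_of_gap hxy hrank hbox.1 (by omega) hbox.2.2.2
      fun q' h1 h2 h3 => hq_min q' ⟨h1, h3.1, by omega⟩ (by omega)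
    split_ifs at h <;> omega
  · split_ifs at h <;> omega

theorem RankLE.bruhatLE {x y : Perm (Fin n)} (h : RankLE x y) : BruhatLE x y := by
  by_cases hxy : x = y
  · exact hxy ▸ Relation.ReflTransGen.refl
  obtain ⟨y', hstep, h'⟩ := exists_bruhatStep_rankLE h hxy
  exact (RankLE.bruhatLE h').tail hstep
termination_by len y
decreasing_by exact hstep.2

section Lifting

variable {a b : Fin n}

theorem rankCount_swap_mul_of_ne (w : Perm (Fin n)) (hb : (b : ℕ) = a + 1) {p j : ℕ}
    (hj : j ≠ b) : rankCount (swap a b * w) p j = rankCount w p j := by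
  have := rankCount_swap_mul w (a := a) (b := b) (Fin.ne_of_val_ne (by omega)) p j
  split_ifs at this <;> omega

theorem rankCount_swap_mul_add_ite (w : Perm (Fin n)) (hb : (b : ℕ) = a + 1) (p : ℕ) :
    rankCount (swap a b * w) p b + (if (w⁻¹ b : ℕ) < p then 1 else 0) =
      rankCount w p b + if (w⁻¹ a : ℕ) < p then 1 else 0 := by
  have := rankCount_swap_mul w (a := a) (b := b) (Fin.ne_of_val_ne (by omega)) p b
  split_ifs at this ⊢ <;> omega

theorem RankLE.le_swap_mul {x y : Perm (Fin n)} (hb : (b : ℕ) = a + 1) (hxy : RankLE x y)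
    (hx : x⁻¹ a < x⁻¹ b) : RankLE x (swap a b * y) := by
  intro p j
  rcases eq_or_ne j b with rfl | hj
  · have hsy := rankCount_swap_mul_add_ite y hb p
    have hxa := rankCount_eq_rankCount_succ_add x p a
    have hya := rankCount_eq_rankCount_succ_add y p a
    have hxb := rankCount_eq_rankCount_succ_add x p b
    have hyb := rankCount_eq_rankCount_succ_add y p b
    rw [← hb] at hxa hya
    have := hxy p a
    have := hxy p (b + 1)
    split_ifs at hsy hxa hya hxb hyb <;> omega
  · rw [rankCount_swap_mul_of_ne y hb hj]
    exact hxy p j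

theorem RankLE.swap_mul_le {x y : Perm (Fin n)} (hb : (b : ℕ) = a + 1) (hxy : RankLE x y)
    (hy : y⁻¹ b < y⁻¹ a) : RankLE (swap a b * x) y := by
  intro p j
  rcases eq_or_ne j b with rfl | hj
  · have hsx := rankCount_swap_mul_add_ite x hb p
    have hxa := rankCount_eq_rankCount_succ_add x p a
    have hya := rankCount_eq_rankCount_succ_add y p a
    have hxb := rankCount_eq_rankCount_succ_add x p b
    have hyb := rankCount_eq_rankCount_succ_add y p b
    rw [← hb] at hxa hya
    have := hxy p a
    have := hxy p (b + 1)
    split_ifs at hsx hxa hya hxb hyb <;> omega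
  · rw [rankCount_swap_mul_of_ne x hb hj]
    exact hxy p j

end Lifting

section SimpleReflection

variable {i : ℕ} {hi : i + 1 < n}

theorem simpleT_mul_simpleT_mul (w : Perm (Fin n)) :
    simpleT n i hi * (simpleT n i hi * w) = w :=
  swap_mul_self_mul _ _ w

theorem len_simpleT_mul_lt_or_lt (w : Perm (Fin n)) :
    len (simpleT n i hi * w) < len w ∨ len w < len (simpleT n i hi * w) := by
  unfold simpleT
  rw [len_swap_mul_lt_iff (Fin.mk_lt_mk.2 i.lt_succ_self),
    len_lt_len_swap_mul_iff (Fin.mk_lt_mk.2 i.lt_succ_self)]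
  exact lt_or_gt_of_ne (by simp)

theorem bruhatLE_simpleT_mul {w : Perm (Fin n)} (hw : len w < len (simpleT n i hi * w)) :
    BruhatLE w (simpleT n i hi * w) :=
  .single ⟨⟨_, _, Fin.ne_of_val_ne (by simp), rfl⟩, hw⟩

theorem BruhatLE.trans {x y z : Perm (Fin n)} (hxy : BruhatLE x y) (hyz : BruhatLE y z) :
    BruhatLE x z :=
  Relation.ReflTransGen.trans hxy hyz

variable {x y : Perm (Fin n)}

theorem BruhatLE.le_simpleT_mul (hxy : BruhatLE x y) (hx : len x < len (simpleT n i hi * x)) :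
    BruhatLE x (simpleT n i hi * y) := by
  unfold simpleT at *
  exact (hxy.rankLE.le_swap_mul rfl
    ((len_lt_len_swap_mul_iff (Fin.mk_lt_mk.2 i.lt_succ_self)).1 hx)).bruhatLE

theorem BruhatLE.simpleT_mul_le (hxy : BruhatLE x y) (hy : len (simpleT n i hi * y) < len y) :
    BruhatLE (simpleT n i hi * x) y := by
  unfold simpleT at *
  exact (hxy.rankLE.swap_mul_le rfl
    ((len_swap_mul_lt_iff (Fin.mk_lt_mk.2 i.lt_succ_self)).1 hy)).bruhatLE

theorem BruhatLE.simpleT_mul_of_descent (hxy : BruhatLE x y)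
    (hx : len (simpleT n i hi * x) < len x) :
    BruhatLE (simpleT n i hi * x) (simpleT n i hi * y) := by
  have hsx : len (simpleT n i hi * x) < len (simpleT n i hi * (simpleT n i hi * x)) := by
    rwa [simpleT_mul_simpleT_mul]
  have hxsx := bruhatLE_simpleT_mul hsx
  rw [simpleT_mul_simpleT_mul] at hxsx
  exact (hxsx.trans hxy).le_simpleT_mul hsx

theorem BruhatLE.simpleT_mul_of_ascent (hxy : BruhatLE x y)
    (hy : len y < len (simpleT n i hi * y)) :
    BruhatLE (simpleT n i hi * x) (simpleT n i hi * y) :=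
  (hxy.trans (bruhatLE_simpleT_mul hy)).simpleT_mul_le (by rwa [simpleT_mul_simpleT_mul])

end SimpleReflection

end Permutations

theorem stmt9_general (n : ℕ) (i : ℕ) (h : i + 1 < n) (x y : Perm (Fin n))
    (hy : len (simpleT n i h * y) < len y)
    (hx : len (simpleT n i h * x) < len x)
    (hinc : ¬ BruhatLE x (simpleT n i h * y) ∧ ¬ BruhatLE (simpleT n i h * y) x) :
    (∀ z : Perm (Fin n), BruhatLE x z → BruhatLE z y →
        BruhatLE (simpleT n i h * x) (simpleT n i h * z) ∧
        BruhatLE (simpleT n i h * z) (simpleT n i h * y)) ∧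
    (∀ z z' : Perm (Fin n), BruhatLE x z → BruhatLE z y →
        BruhatLE x z' → BruhatLE z' y → BruhatLE z z' →
        BruhatLE (simpleT n i h * z) (simpleT n i h * z')) ∧
    (∀ z z' : Perm (Fin n), BruhatLE x z → BruhatLE z y →
        BruhatLE x z' → BruhatLE z' y →
        simpleT n i h * z = simpleT n i h * z' → z = z') ∧
    (∀ z' : Perm (Fin n),
        BruhatLE (simpleT n i h * x) z' → BruhatLE z' (simpleT n i h * y) →
        ∃ z, BruhatLE x z ∧ BruhatLE z y ∧ z' = simpleT n i h * z) := by
  have hdesc : ∀ z, BruhatLE x z → BruhatLE z y → len (simpleT n i h * z) < len z :=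
    fun z hxz hzy => (len_simpleT_mul_lt_or_lt z).resolve_right fun hz =>
      hinc.1 (hxz.trans (hzy.le_simpleT_mul hz))
  have hasc : ∀ z', BruhatLE (simpleT n i h * x) z' → BruhatLE z' (simpleT n i h * y) →
      len z' < len (simpleT n i h * z') := fun z' hxz' hz'y =>
    (len_simpleT_mul_lt_or_lt z').resolve_left fun hz' => by
      have hxz' := hxz'.simpleT_mul_le hz'
      rw [simpleT_mul_simpleT_mul] at hxz'
      exact hinc.1 (hxz'.trans hz'y)
  refine ⟨fun z hxz hzy => ⟨hxz.simpleT_mul_of_descent hx,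
      hzy.simpleT_mul_of_descent (hdesc z hxz hzy)⟩,
    fun z z' hxz hzy _ _ hzz' => hzz'.simpleT_mul_of_descent (hdesc z hxz hzy),
    fun z z' _ _ _ _ => mul_left_cancel,
    fun z' hxz' hz'y => ⟨simpleT n i h * z', ?_, ?_, (simpleT_mul_simpleT_mul z').symm⟩⟩
  · simpa only [simpleT_mul_simpleT_mul] using hxz'.simpleT_mul_of_ascent (hasc z' hxz' hz'y)
  · have hsy : len (simpleT n i h * y) < len (simpleT n i h * (simpleT n i h * y)) := by
      rwa [simpleT_mul_simpleT_mul]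
    simpa only [simpleT_mul_simpleT_mul] using hz'y.simpleT_mul_of_ascent hsy

theorem stmt9 (n : ℕ) (i : ℕ) (h : i + 1 < n) (x y : Perm (Fin n))
    (hxy : BruhatLT x y)
    (hy : len (simpleT n i h * y) < len y)
    (hx : len (simpleT n i h * x) < len x)
    (hinc : ¬ BruhatLE x (simpleT n i h * y) ∧ ¬ BruhatLE (simpleT n i h * y) x) :
    (∀ z : Perm (Fin n), BruhatLE x z → BruhatLE z y →
        BruhatLE (simpleT n i h * x) (simpleT n i h * z) ∧
        BruhatLE (simpleT n i h * z) (simpleT n i h * y)) ∧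
    (∀ z z' : Perm (Fin n), BruhatLE x z → BruhatLE z y →
        BruhatLE x z' → BruhatLE z' y → BruhatLE z z' →
        BruhatLE (simpleT n i h * z) (simpleT n i h * z')) ∧
    (∀ z z' : Perm (Fin n), BruhatLE x z → BruhatLE z y →
        BruhatLE x z' → BruhatLE z' y →
        simpleT n i h * z = simpleT n i h * z' → z = z') ∧
    (∀ z' : Perm (Fin n),
        BruhatLE (simpleT n i h * x) z' → BruhatLE z' (simpleT n i h * y) →
        ∃ z, BruhatLE x z ∧ BruhatLE z y ∧ z' = simpleT n i h * z) :=
  stmt9_general n i h x y hy hx hinc
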